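/- Let R = K[a, v2, v1] and suppose r1, r2, r3 ∈ R satisfy v1·r1 + v2·r2 + (a^{r+1} v1 + v2^{t-1} A)·r3 = 0, where t ≥ 2 and A ∈ K[a, v2]. Then there exists C ∈ R with r1 + a^{r+1} r3 = C v2 and -r2 - v2^{t-2} A r3 = C v1; consequently (r1,r2,r3) is the image of (-r3, C, 0) under the matrix with rows (a^{r+1}, v2, 0), (v2^{t-2}A, -v1, a^{r+1}v1+v2^{t-1}A), (-1, 0, -v2) acting on column vectors. -/

import Mathlib

noncomputable section

open MvPolynomial

/-- `R = K[a, v₂, v₁]`, with `a = X 0`, `v₂ = X 1`, `v₁ = X 2`. -/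
abbrev R3 (K : Type*) [Field K] := MvPolynomial (Fin 3) K

variable (K : Type*) [Field K]

/-- The inclusion of `K[a, v₂]` into `R = K[a, v₂, v₁]`. -/
def emb (A0 : MvPolynomial (Fin 2) K) : R3 K := aeval ![X 0, X 1] A0

/-- The middle matrix of the locally free resolution, on the chart `U₁`. -/
def matM (r t : ℕ) (A : R3 K) : Matrix (Fin 3) (Fin 3) (R3 K) :=
  !![X 0 ^ (r + 1), X 1, 0;
     X 1 ^ (t - 2) * A, -(X 2), X 0 ^ (r + 1) * X 2 + X 1 ^ (t - 1) * A;
     -1, 0, -(X 1)]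

/-- If `v₁ r₁ + v₂ r₂ + (a^{r+1} v₁ + v₂^{t-1} A) r₃ = 0`, then there exists `C` with
`r₁ + a^{r+1} r₃ = C v₂` and `-r₂ - v₂^{t-2} A r₃ = C v₁`; consequently `(r₁, r₂, r₃)`
is the image of `(-r₃, C, 0)` under the middle matrix. -/
theorem stmt9 (r t : ℕ) (ht : 2 ≤ t) (A0 : MvPolynomial (Fin 2) K)
    (r1 r2 r3 : R3 K)
    (hrel : X 2 * r1 + X 1 * r2 +
      (X 0 ^ (r + 1) * X 2 + X 1 ^ (t - 1) * emb K A0) * r3 = 0) :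
    ∃ C : R3 K,
      r1 + X 0 ^ (r + 1) * r3 = C * X 1 ∧
      -r2 - X 1 ^ (t - 2) * emb K A0 * r3 = C * X 2 ∧
      (matM K r t (emb K A0)).mulVec ![-r3, C, 0] = ![r1, r2, r3] := by
  set A : R3 K := emb K A0 with hA
  have htt : t - 1 = (t - 2) + 1 := by omega
  have key : X 2 * (r1 + X 0 ^ (r + 1) * r3) =
      X 1 * (-r2 - X 1 ^ (t - 2) * A * r3) := by
    rw [htt] at hrel
    ring_nf
    ring_nf at hrel
    linear_combination hrel
  have hprime : Prime (X 2 : R3 K) := by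
    rw [← MulEquiv.prime_iff (e := ((renameEquiv K (Equiv.swap (0 : Fin 3) 2)).trans
      (MvPolynomial.finSuccEquiv K 2)).toMulEquiv)]
    show Prime (((renameEquiv K (Equiv.swap (0 : Fin 3) 2)).trans
      (MvPolynomial.finSuccEquiv K 2)) (X 2))
    rw [AlgEquiv.trans_apply, renameEquiv_apply, rename_X, Equiv.swap_apply_right,
      MvPolynomial.finSuccEquiv_X_zero]
    exact Polynomial.prime_X
  have hnd : ¬ (X 2 : R3 K) ∣ X 1 := by
    intro ⟨c, hc⟩
    have := congrArg (eval fun i : Fin 3 => if i = 1 then (1 : K) else 0) hc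
    simp at this
  have hdvd : (X 2 : R3 K) ∣ X 1 * (-r2 - X 1 ^ (t - 2) * A * r3) := ⟨_, key.symm⟩
  obtain ⟨C, hC⟩ := (hprime.dvd_mul.mp hdvd).resolve_left hnd
  have h2 : -r2 - X 1 ^ (t - 2) * A * r3 = C * X 2 := by rw [hC]; ring
  have h1 : r1 + X 0 ^ (r + 1) * r3 = C * X 1 := by
    have hx2 : (X 2 : R3 K) ≠ 0 := hprime.ne_zero
    apply mul_left_cancel₀ hx2
    rw [key, hC]; ring
  refine ⟨C, h1, h2, ?_⟩
  funext i
  fin_cases i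
  · simp only [matM, Matrix.mulVec, dotProduct, Fin.sum_univ_succ]
    simp
    linear_combination -h1
  · simp only [matM, Matrix.mulVec, dotProduct, Fin.sum_univ_succ]
    simp
    linear_combination h2
  · simp only [matM, Matrix.mulVec, dotProduct, Fin.sum_univ_succ]
    simp
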